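/- arXiv:quant-ph/0406215 — 2 statements merged into one kernel-verified Lean document; each statement's English description precedes it below -/
import Mathlib

section
/- For positive semidefinite matrices A and B (not necessarily of unit trace) with ker B ⊆ ker A, the extended relative entropy satisfies the Bogoliubov inequality: Tr[A(log A − log B)] ≥ Tr[A](log Tr[A] − log Tr[B]). -/
open Matrix Kronecker
open scoped BigOperators ComplexOrder

variable {n m : Type*}

/-- Functional-calculus logarithm of a Hermitian matrix, restricted to its support
(zero eigenvalues are sent to zero). Returns 0 for non-Hermitian matrices. -/
noncomputable def matLog [Fintype n] [DecidableEq n] (A : Matrix n n ℂ) : Matrix n n ℂ :=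
  if h : A.IsHermitian then
    (h.eigenvectorUnitary : Matrix n n ℂ) *
      Matrix.diagonal (fun i => (Real.log (h.eigenvalues i) : ℂ)) *
      (star (h.eigenvectorUnitary : Matrix n n ℂ))
  else 0

/-- Extended Umegaki relative entropy `S(A,B) = Tr[A(log A − log B)]` (real part). -/
noncomputable def relEnt [Fintype n] [DecidableEq n] (A B : Matrix n n ℂ) : ℝ :=
  ((A * (matLog A - matLog B)).trace).re

/-- von Neumann entropy `S(ρ) = −Tr[ρ log ρ]`. -/
noncomputable def vnEnt [Fintype n] [DecidableEq n] (ρ : Matrix n n ℂ) : ℝ :=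
  -((ρ * matLog ρ).trace).re

/-- A density matrix: positive semidefinite with unit trace. -/
def IsDensity [Fintype n] [DecidableEq n] (ρ : Matrix n n ℂ) : Prop :=
  ρ.PosSemidef ∧ ρ.trace = 1

/-- Completely positive trace-preserving map, via a Kraus representation. -/
def IsCPTP [Fintype n] [DecidableEq n] [Fintype m] [DecidableEq m]
    (Λ : Matrix n n ℂ → Matrix m m ℂ) : Prop :=
  ∃ (ι : Type) (_ : Fintype ι) (K : ι → Matrix m n ℂ),
    (∀ A, Λ A = ∑ i, K i * A * (K i)ᴴ) ∧ (∑ i, (K i)ᴴ * K i = 1)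

/-- An orthogonal resolution of the identity (projection valued measure). -/
def OrthRes [Fintype n] [DecidableEq n] {ι : Type*} [Fintype ι]
    (E : ι → Matrix n n ℂ) : Prop :=
  (∀ i, (E i).IsHermitian) ∧ (∀ i, E i * E i = E i) ∧
  (∀ i j, i ≠ j → E i * E j = 0) ∧ (∑ i, E i = 1)

/-- A Schatten decomposition of ρ: rank-one orthogonal spectral projections. -/
def SchattenDecomp [Fintype n] [DecidableEq n]
    (ρ : Matrix n n ℂ) (lam : n → ℝ) (E : n → Matrix n n ℂ) : Prop :=
  (∀ k, 0 ≤ lam k) ∧ OrthRes E ∧ (∀ k, (E k).trace = 1) ∧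
  ρ = ∑ k, (lam k : ℂ) • E k

/-- Ohya's quantum mutual entropy `I(ρ;Λ*)`. -/
noncomputable def mutEnt [Fintype n] [DecidableEq n] [Fintype m] [DecidableEq m]
    (ρ : Matrix n n ℂ) (Λ : Matrix n n ℂ → Matrix m m ℂ) : ℝ :=
  sSup {x : ℝ | ∃ lam E, SchattenDecomp ρ lam E ∧
    x = ∑ k, lam k * relEnt (Λ (E k)) (Λ ρ)}

/-!
Diagonalize `A = U diag(a) U*` and `B = V diag(b) V*`. The squared moduli
`P i j = |(U* V) i j|²` of the unitary `U* V` form a doubly stochastic matrix, and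
`S(A, B) = ∑ i j, P i j * a i * (log a i - log b j)`. The claim is thus a log-sum inequality
for the coupling `P` of `a` and `b`, which follows termwise from `log t ≤ t - 1`. The kernel
condition makes `P i j = 0` whenever `a i ≠ 0 = b j`, so the junk value `log 0 = 0` never
enters with a nonzero weight.
-/

namespace Real

lemma mul_log_add_sub_mul_le_mul_log_sub_log {x y c : ℝ} (hx : 0 ≤ x) (hy : 0 ≤ y)
    (hxy : y = 0 → x = 0) (hc : 0 < c) :
    x * log c + x - c * y ≤ x * (log x - log y) := by
  rcases hx.eq_or_lt with rfl | hx
  · simpa using mul_nonneg hc.le hy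
  have hy : 0 < y := hy.lt_of_ne fun h => hx.ne' (hxy h.symm)
  have key : log (c * y / x) ≤ c * y / x - 1 := log_le_sub_one_of_pos (by positivity)
  rw [log_div (by positivity) hx.ne', log_mul hc.ne' hy.ne'] at key
  have := mul_le_mul_of_nonneg_left key hx.le
  rw [mul_sub_one, mul_div_cancel₀ _ hx.ne'] at this
  linarith

lemma mul_log_sum_sub_log_sum_le_of_mem_doublyStochastic [Fintype n] [DecidableEq n]
    {P : Matrix n n ℝ} (hP : P ∈ doublyStochastic ℝ n) {a b : n → ℝ}
    (ha : ∀ i, 0 ≤ a i) (hb : ∀ j, 0 ≤ b j) (hab : ∀ i j, P i j ≠ 0 → b j = 0 → a i = 0)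
    (ha₀ : 0 < ∑ i, a i) (hb₀ : 0 < ∑ j, b j) :
    (∑ i, a i) * (log (∑ i, a i) - log (∑ j, b j)) ≤
      ∑ i, ∑ j, P i j * (a i * (log (a i) - log (b j))) := by
  set c := (∑ i, a i) / ∑ j, b j
  have hc : 0 < c := div_pos ha₀ hb₀
  have hrow (f : n → ℝ) : ∑ i, ∑ j, P i j * f i = ∑ i, f i := by
    simp [← Finset.sum_mul, sum_row_of_mem_doublyStochastic hP]
  have hcol (g : n → ℝ) : ∑ i, ∑ j, P i j * g j = ∑ j, g j := by
    rw [Finset.sum_comm]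
    simp [← Finset.sum_mul, sum_col_of_mem_doublyStochastic hP]
  have hterm (i j : n) :
      P i j * (a i * log c + a i - c * b j) ≤ P i j * (a i * (log (a i) - log (b j))) := by
    rcases eq_or_ne (P i j) 0 with h | h
    · simp [h]
    exact mul_le_mul_of_nonneg_left
      (mul_log_add_sub_mul_le_mul_log_sub_log (ha i) (hb j) (hab i j h) hc)
      (nonneg_of_mem_doublyStochastic hP)
  calc (∑ i, a i) * (log (∑ i, a i) - log (∑ j, b j))
      = (∑ i, (a i * log c + a i)) - c * ∑ j, b j := by
        rw [div_mul_cancel₀ _ hb₀.ne', Finset.sum_add_distrib, ← Finset.sum_mul,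
          log_div ha₀.ne' hb₀.ne']
        ring
    _ = ∑ i, ∑ j, P i j * (a i * log c + a i - c * b j) := by
        simp only [mul_sub, Finset.sum_sub_distrib, hrow (fun i => a i * log c + a i),
          mul_left_comm _ c, ← Finset.mul_sum, hcol]
    _ ≤ _ := Finset.sum_le_sum fun i _ => Finset.sum_le_sum fun j _ => hterm i j

end Real

namespace Matrix

variable [Fintype n] [DecidableEq n]

lemma PosSemidef.sum_eigenvalues_pos {𝕜 : Type*} [RCLike 𝕜] {A : Matrix n n 𝕜}
    (hA : A.PosSemidef) (h : A ≠ 0) : 0 < ∑ i, hA.1.eigenvalues i := by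
  obtain ⟨i, hi⟩ := Function.ne_iff.1 (hA.1.eigenvalues_eq_zero_iff.not.2 h)
  exact Finset.sum_pos' (fun i _ => hA.eigenvalues_nonneg i)
    ⟨i, Finset.mem_univ i, (hA.eigenvalues_nonneg i).lt_of_ne' hi⟩

lemma IsHermitian.re_trace_eq_sum_eigenvalues {A : Matrix n n ℂ} (hA : A.IsHermitian) :
    A.trace.re = ∑ i, hA.eigenvalues i := by
  simp [hA.trace_eq_sum_eigenvalues, Complex.re_sum]

lemma normSq_mem_doublyStochastic_of_mem_unitaryGroup {U : Matrix n n ℂ}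
    (hU : U ∈ unitaryGroup n ℂ) :
    (of fun i j => Complex.normSq (U i j)) ∈ doublyStochastic ℝ n := by
  have hrow {M : Matrix n n ℂ} (hM : M ∈ unitaryGroup n ℂ) (i : n) :
      ∑ j, Complex.normSq (M i j) = 1 := by
    have := congr_fun (congr_fun (mem_unitaryGroup_iff.1 hM) i) i
    simp only [mul_apply, star_apply, RCLike.star_def, Complex.mul_conj, one_apply_eq] at this
    exact_mod_cast this
  refine mem_doublyStochastic_iff_sum.2 ⟨fun i j => Complex.normSq_nonneg _, hrow hU, fun j => ?_⟩
  simpa [star_apply] using hrow (Unitary.star_mem hU) j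

lemma re_trace_conj_diagonal_mul_conj_diagonal (U V : Matrix n n ℂ) (d e : n → ℝ) :
    (U * diagonal (fun i => (d i : ℂ)) * star U *
        (V * diagonal (fun j => (e j : ℂ)) * star V)).trace.re
      = ∑ i, ∑ j, Complex.normSq ((star U * V) i j) * (d i * e j) := by
  set D := diagonal fun i => (d i : ℂ)
  set E := diagonal fun j => (e j : ℂ)
  set M := star U * V
  have hcycle : (U * D * star U * (V * E * star V)).trace = (D * M * E * star M).trace := by
    rw [show U * D * star U * (V * E * star V) = U * (D * star U * V * E * star V) by
      simp only [Matrix.mul_assoc], trace_mul_comm]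
    simp only [M, star_mul, star_star, Matrix.mul_assoc]
  have hDME : D * M * E = of fun i j => (d i : ℂ) * M i j * e j := by
    ext
    simp only [D, E, mul_diagonal, diagonal_mul, of_apply]
  have hentry (i j : n) : (d i : ℂ) * M i j * (e j : ℂ) * star (M i j)
      = ((Complex.normSq (M i j) * (d i * e j) : ℝ) : ℂ) := by
    rw [RCLike.star_def, Complex.ofReal_mul, ← Complex.mul_conj]
    push_cast
    ring
  rw [hcycle, hDME]
  simp only [trace, diag_apply, mul_apply, of_apply, star_apply, hentry, Complex.re_sum,
    Complex.ofReal_re]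

namespace IsHermitian

variable {A B : Matrix n n ℂ}

noncomputable def eigenOverlap (hA : A.IsHermitian) (hB : B.IsHermitian) : Matrix n n ℝ :=
  of fun i j =>
    Complex.normSq ((star (hA.eigenvectorUnitary : Matrix n n ℂ) * hB.eigenvectorUnitary) i j)

lemma eigenOverlap_mem_doublyStochastic (hA : A.IsHermitian) (hB : B.IsHermitian) :
    eigenOverlap hA hB ∈ doublyStochastic ℝ n :=
  normSq_mem_doublyStochastic_of_mem_unitaryGroup
    (mul_mem (Unitary.star_mem hA.eigenvectorUnitary.2) hB.eigenvectorUnitary.2)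

lemma eigenOverlap_self (hA : A.IsHermitian) : eigenOverlap hA hA = 1 := by
  ext i j
  rw [eigenOverlap, of_apply, Unitary.coe_star_mul_self]
  rcases eq_or_ne i j with rfl | h
  · simp
  · simp [one_apply_ne h]

lemma re_trace_mul_matLog (hA : A.IsHermitian) (hB : B.IsHermitian) :
    (A * matLog B).trace.re =
      ∑ i, ∑ j, eigenOverlap hA hB i j * (hA.eigenvalues i * Real.log (hB.eigenvalues j)) := by
  conv_lhs => rw [hA.spectral_theorem, matLog, dif_pos hB]
  exact re_trace_conj_diagonal_mul_conj_diagonal _ _ _ _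

lemma relEnt_eq_sum (hA : A.IsHermitian) (hB : B.IsHermitian) :
    relEnt A B = ∑ i, ∑ j, eigenOverlap hA hB i j *
      (hA.eigenvalues i * (Real.log (hA.eigenvalues i) - Real.log (hB.eigenvalues j))) := by
  have hself : (A * matLog A).trace.re =
      ∑ i, ∑ j, eigenOverlap hA hB i j * (hA.eigenvalues i * Real.log (hA.eigenvalues i)) := by
    simp [re_trace_mul_matLog hA hA, eigenOverlap_self, one_apply, ← Finset.sum_mul,
      sum_row_of_mem_doublyStochastic (eigenOverlap_mem_doublyStochastic hA hB)]
  rw [relEnt, Matrix.mul_sub, trace_sub, Complex.sub_re, hself, re_trace_mul_matLog hA hB]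
  simp only [← Finset.sum_sub_distrib, ← mul_sub]

lemma eigenvalues_eq_zero_of_eigenOverlap_ne_zero (hA : A.IsHermitian) (hB : B.IsHermitian)
    (hker : ∀ v, B *ᵥ v = 0 → A *ᵥ v = 0) {i j : n} (hij : eigenOverlap hA hB i j ≠ 0)
    (hj : hB.eigenvalues j = 0) : hA.eigenvalues i = 0 := by
  set u : n → ℂ := ⇑(hA.eigenvectorBasis i)
  set v : n → ℂ := ⇑(hB.eigenvectorBasis j)
  have hAu : A *ᵥ u = hA.eigenvalues i • u := hA.mulVec_eigenvectorBasis i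
  have hAv : A *ᵥ v = 0 := hker v (by rw [hB.mulVec_eigenvectorBasis, hj, zero_smul])
  have hentry : (star (hA.eigenvectorUnitary : Matrix n n ℂ) * hB.eigenvectorUnitary) i j
      = star u ⬝ᵥ v := by
    simp [mul_apply, dotProduct, u, v]
  have hmul : (hA.eigenvalues i : ℂ) * (star u ⬝ᵥ v) = 0 :=
    calc (hA.eigenvalues i : ℂ) * (star u ⬝ᵥ v) = star (A *ᵥ u) ⬝ᵥ v := by
          rw [hAu, star_smul, star_trivial (hA.eigenvalues i), smul_dotProduct, Complex.real_smul]
      _ = star u ⬝ᵥ (A *ᵥ v) := by rw [star_mulVec, hA.eq, dotProduct_mulVec]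
      _ = 0 := by rw [hAv, dotProduct_zero]
  rcases mul_eq_zero.1 hmul with h | h
  · exact_mod_cast h
  · exact absurd (by simp [eigenOverlap, hentry, h]) hij

end IsHermitian

end Matrix

theorem stmt0_bogoliubov_general [Fintype n] [DecidableEq n]
    (A B : Matrix n n ℂ) (hA : A.PosSemidef) (hB : B.PosSemidef)
    (hker : ∀ v : n → ℂ, B.mulVec v = 0 → A.mulVec v = 0) :
    relEnt A B ≥ A.trace.re * (Real.log A.trace.re - Real.log B.trace.re) := by
  rcases eq_or_ne A 0 with rfl | hA0
  · simp [relEnt]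
  have hB0 : B ≠ 0 := by
    rintro rfl
    exact hA0 (ext_of_mulVec_single fun j => by rw [hker _ (zero_mulVec _), zero_mulVec])
  rw [ge_iff_le, hA.1.relEnt_eq_sum hB.1, hA.1.re_trace_eq_sum_eigenvalues,
    hB.1.re_trace_eq_sum_eigenvalues]
  exact Real.mul_log_sum_sub_log_sum_le_of_mem_doublyStochastic
    (hA.1.eigenOverlap_mem_doublyStochastic hB.1) hA.eigenvalues_nonneg hB.eigenvalues_nonneg
    (fun _ _ => hA.1.eigenvalues_eq_zero_of_eigenOverlap_ne_zero hB.1 hker)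
    (hA.sum_eigenvalues_pos hA0) (hB.sum_eigenvalues_pos hB0)

/-- Bogoliubov inequality for the extended relative entropy. -/
theorem stmt0_bogoliubov [Fintype n] [DecidableEq n]
    (A B : Matrix n n ℂ) (hA : A.PosSemidef) (hB : B.PosSemidef)
    (hA0 : A ≠ 0) (hB0 : B ≠ 0)
    (hker : ∀ v : n → ℂ, B.mulVec v = 0 → A.mulVec v = 0) :
    relEnt A B ≥ A.trace.re * (Real.log A.trace.re - Real.log B.trace.re) :=
  stmt0_bogoliubov_general A B hA hB hker
end

section
/- For a Schatten decomposition ρ = ∑_k λ_k E_k and a channel Λ*, the relative entropy of the compound state with respect to the product state equals the Holevo-type sum: S(σ_E, ρ ⊗ Λ*ρ) = ∑_k λ_k S(Λ*E_k, Λ*ρ), where σ_E = ∑_k λ_k E_k ⊗ Λ*(E_k). -/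
open Matrix Kronecker
open scoped BigOperators ComplexOrder

variable {n m : Type*}

/-!
The projections `E k` are orthogonal and sum to one, so both states are block diagonal along
them: `σ_E = ∑ₖ E k ⊗ λₖ Λ(E k)` and `ρ ⊗ Λρ = ∑ₖ E k ⊗ λₖ Λρ`. On a matrix with finite spectrum
the logarithm is a polynomial, so it acts blockwise and the relative entropy splits as
`∑ₖ S(λₖ Λ(E k), λₖ Λρ)`. Finally `log (c B) = log c · supp B + log B`, and the `log λₖ` terms
cancel because `λₖ Λ(E k) ≤ Λρ` forces `ker Λρ ⊆ ker Λ(E k)`.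
-/

open Polynomial

section FunctionalCalculus
variable {N : Type*} [Fintype N] [DecidableEq N] {A : Matrix N N ℂ}

theorem matLog_eq_cfc (hA : A.IsHermitian) : matLog A = cfc Real.log A := by
  rw [matLog, dif_pos hA, hA.cfc_eq]
  rfl

theorem matLog_eq_aeval (hA : A.IsHermitian) {p : ℝ[X]}
    (hp : (spectrum ℝ A).EqOn (fun x => p.eval x) Real.log) : matLog A = aeval A p := by
  rw [matLog_eq_cfc hA, ← cfc_congr hp, cfc_polynomial p A hA.isSelfAdjoint]

theorem exists_polynomial_eqOn {K : Type*} [Field K] (f : K → K) {s : Set K} (hs : s.Finite) :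
    ∃ p : K[X], s.EqOn (fun x => p.eval x) f := by
  classical
  exact ⟨Lagrange.interpolate hs.toFinset id f, fun _ hx =>
    Lagrange.eval_interpolate_at_node f (Set.injOn_id _) (hs.mem_toFinset.mpr hx)⟩

end FunctionalCalculus

section BlockDiagonal

theorem sum_kronecker {R ι l m n p : Type*} [NonUnitalNonAssocSemiring R] [Fintype ι]
    (A : ι → Matrix l m R) (B : Matrix n p R) : (∑ i, A i) ⊗ₖ B = ∑ i, A i ⊗ₖ B := by
  ext
  simp [Matrix.sum_apply, Finset.sum_mul]

theorem trace_sum_kronecker {R ι N M : Type*} [CommSemiring R] [Fintype ι] [Fintype N]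
    [Fintype M] {E : ι → Matrix N N R} (hE : ∀ i, (E i).trace = 1) (A : ι → Matrix M M R) :
    (∑ i, E i ⊗ₖ A i).trace = ∑ i, (A i).trace := by
  simp [trace_sum, trace_kronecker, hE]

theorem isHermitian_sum_kronecker {ι N M : Type*} [Fintype ι] {E : ι → Matrix N N ℂ}
    {A : ι → Matrix M M ℂ} (hE : ∀ i, (E i).IsHermitian) (hA : ∀ i, (A i).IsHermitian) :
    (∑ i, E i ⊗ₖ A i).IsHermitian := by
  simp only [IsHermitian, conjTranspose_sum, conjTranspose_kronecker, (hE _).eq, (hA _).eq]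

theorem OrthRes.sum_kronecker_one {ι N M : Type*} [Fintype ι] [Fintype N] [DecidableEq N]
    [DecidableEq M] {E : ι → Matrix N N ℂ} (hE : OrthRes E) :
    ∑ i, E i ⊗ₖ (1 : Matrix M M ℂ) = 1 := by
  rw [← sum_kronecker, hE.2.2.2, one_kronecker_one]

variable {N M ι : Type*} [Fintype N] [DecidableEq N] [Fintype M] [Fintype ι]
  {E : ι → Matrix N N ℂ}

theorem OrthRes.sum_kronecker_mul_sum_kronecker (hE : OrthRes E) (A B : ι → Matrix M M ℂ) :
    (∑ i, E i ⊗ₖ A i) * (∑ i, E i ⊗ₖ B i) = ∑ i, E i ⊗ₖ (A i * B i) := by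
  rw [Finset.sum_mul_sum]
  refine Finset.sum_congr rfl fun i _ => ?_
  rw [Finset.sum_eq_single i (fun j _ hji => by rw [← mul_kronecker_mul, hE.2.2.1 i j hji.symm,
    zero_kronecker]) (by simp), ← mul_kronecker_mul, hE.2.1 i]

variable [DecidableEq M]

noncomputable def OrthRes.blockDiagAlgHom (hE : OrthRes E) :
    (ι → Matrix M M ℂ) →ₐ[ℝ] Matrix (N × M) (N × M) ℂ where
  toFun A := ∑ i, E i ⊗ₖ A i
  map_one' := hE.sum_kronecker_one
  map_mul' A B := (hE.sum_kronecker_mul_sum_kronecker A B).symm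
  map_zero' := by simp
  map_add' A B := by simp [kronecker_add, Finset.sum_add_distrib]
  commutes' r := by
    simp [Algebra.algebraMap_eq_smul_one, kronecker_smul, ← Finset.smul_sum, hE.sum_kronecker_one]

@[simp]
theorem OrthRes.blockDiagAlgHom_apply (hE : OrthRes E) (A : ι → Matrix M M ℂ) :
    hE.blockDiagAlgHom A = ∑ i, E i ⊗ₖ A i :=
  rfl

theorem OrthRes.matLog_blockDiagAlgHom (hE : OrthRes E) {A : ι → Matrix M M ℂ}
    (hA : ∀ i, (A i).IsHermitian) :
    matLog (hE.blockDiagAlgHom A) = hE.blockDiagAlgHom fun i => matLog (A i) := by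
  obtain ⟨p, hp⟩ := exists_polynomial_eqOn Real.log
    (Set.finite_iUnion fun i => (A i).finite_real_spectrum)
  have hspec : spectrum ℝ (hE.blockDiagAlgHom A) ⊆ ⋃ i, spectrum ℝ (A i) :=
    Pi.spectrum_eq (R := ℝ) A ▸ AlgHom.spectrum_apply_subset _ A
  have hφA : (hE.blockDiagAlgHom A).IsHermitian := by
    simpa using isHermitian_sum_kronecker hE.1 hA
  rw [matLog_eq_aeval hφA (hp.mono hspec), aeval_algHom_apply, aeval_pi_apply]
  congr 1
  funext i
  exact (matLog_eq_aeval (hA i) (hp.mono (Set.subset_iUnion (fun j => spectrum ℝ (A j)) i))).symm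

theorem OrthRes.relEnt_sum_kronecker (hE : OrthRes E) (hEtr : ∀ i, (E i).trace = 1)
    {A B : ι → Matrix M M ℂ} (hA : ∀ i, (A i).IsHermitian) (hB : ∀ i, (B i).IsHermitian) :
    relEnt (∑ i, E i ⊗ₖ A i) (∑ i, E i ⊗ₖ B i) = ∑ i, relEnt (A i) (B i) := by
  simp only [← hE.blockDiagAlgHom_apply, relEnt, hE.matLog_blockDiagAlgHom hA,
    hE.matLog_blockDiagAlgHom hB, ← map_sub, ← map_mul]
  rw [hE.blockDiagAlgHom_apply, trace_sum_kronecker hEtr, Complex.re_sum]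
  rfl

end BlockDiagonal

section Scaling
variable {N : Type*} [Fintype N] [DecidableEq N] {A B : Matrix N N ℂ}

noncomputable def supportProj (B : Matrix N N ℂ) : Matrix N N ℂ :=
  cfc (fun x : ℝ => if x = 0 then 0 else 1) B

theorem mul_supportProj (hB : B.IsHermitian) : B * supportProj B = B := by
  have hcont : ∀ f : ℝ → ℝ, ContinuousOn f (spectrum ℝ B) := B.finite_real_spectrum.continuousOn
  calc B * supportProj B = cfc (fun x : ℝ => x * if x = 0 then 0 else 1) B := by
        rw [supportProj, cfc_mul _ _ B (hcont _) (hcont _), cfc_id' ℝ B hB.isSelfAdjoint]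
    _ = cfc (fun x : ℝ => x) B := cfc_congr fun x _ => by by_cases hx : x = 0 <;> simp [hx]
    _ = B := cfc_id' ℝ B hB.isSelfAdjoint

theorem mul_supportProj_of_ker (hB : B.IsHermitian) (hAB : ∀ v, B *ᵥ v = 0 → A *ᵥ v = 0) :
    A * supportProj B = A := by
  have hB0 : B * (1 - supportProj B) = 0 := by rw [mul_sub, mul_one, mul_supportProj hB, sub_self]
  have hA0 : A * (1 - supportProj B) = 0 := by
    refine ext_of_mulVec_single fun j => ?_
    rw [zero_mulVec, ← mulVec_mulVec]
    exact hAB _ (by rw [mulVec_mulVec, hB0, zero_mulVec])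
  rwa [mul_sub, mul_one, sub_eq_zero, eq_comm] at hA0

theorem matLog_smul (hB : B.IsHermitian) {c : ℝ} (hc : c ≠ 0) :
    matLog ((c : ℂ) • B) = (Real.log c : ℂ) • supportProj B + matLog B := by
  have hcont : ∀ f : ℝ → ℝ, ContinuousOn f (spectrum ℝ B) := B.finite_real_spectrum.continuousOn
  -- valid also at `x = 0` since `Real.log 0 = 0`
  have hlog : ∀ x : ℝ, Real.log (c • x) = Real.log c * (if x = 0 then 0 else 1) + Real.log x := by
    intro x
    by_cases hx : x = 0
    · simp [hx]
    · simp [hx, Real.log_mul hc hx]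
  rw [Complex.coe_smul, matLog_eq_cfc (hB.smul (IsSelfAdjoint.all c)), matLog_eq_cfc hB,
    ← cfc_comp_smul c Real.log B ((B.finite_real_spectrum.image _).continuousOn _)
      hB.isSelfAdjoint]
  simp_rw [hlog]
  rw [cfc_add _ _ _ (hcont _) (hcont _), cfc_const_mul _ _ _ (hcont _), supportProj, Complex.coe_smul]

theorem relEnt_smul_smul (hA : A.IsHermitian) (hB : B.IsHermitian)
    (hAB : ∀ v, B *ᵥ v = 0 → A *ᵥ v = 0) (c : ℝ) :
    relEnt ((c : ℂ) • A) ((c : ℂ) • B) = c * relEnt A B := by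
  rcases eq_or_ne c 0 with rfl | hc
  · simp [relEnt]
  have hcancel : (c : ℂ) • A * (matLog ((c : ℂ) • A) - matLog ((c : ℂ) • B))
      = (c : ℂ) • (A * (matLog A - matLog B)) := by
    simp only [matLog_smul hA hc, matLog_smul hB hc, smul_mul_assoc, mul_sub, mul_add,
      mul_smul_comm, smul_sub, mul_supportProj hA, mul_supportProj_of_ker hB hAB]
    abel
  rw [relEnt, hcancel, trace_smul, smul_eq_mul, Complex.re_ofReal_mul, relEnt]

end Scaling

section Positivity
variable {N ι : Type*} [Fintype N] [Fintype ι]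

theorem mulVec_eq_zero_of_sum_mulVec_eq_zero {𝕜 : Type*} [RCLike 𝕜] {P : ι → Matrix N N 𝕜}
    (hP : ∀ i, (P i).PosSemidef) {v : N → 𝕜} (hv : (∑ i, P i) *ᵥ v = 0) (i : ι) :
    P i *ᵥ v = 0 := by
  have hsum : ∑ j, star v ⬝ᵥ P j *ᵥ v = 0 := by
    rw [← dotProduct_sum, ← sum_mulVec, hv, dotProduct_zero]
  rw [← (hP i).dotProduct_mulVec_zero_iff]
  exact (Finset.sum_eq_zero_iff_of_nonneg fun j _ => (hP j).dotProduct_mulVec_nonneg v).mp hsum i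
    (Finset.mem_univ i)

variable [DecidableEq N]

theorem OrthRes.posSemidef {E : ι → Matrix N N ℂ} (hE : OrthRes E) (i : ι) : (E i).PosSemidef := by
  simpa only [(hE.1 i).eq, hE.2.1 i] using posSemidef_conjTranspose_mul_self (E i)

variable {M : Type*} [Fintype M] [DecidableEq M] {Λ : Matrix N N ℂ → Matrix M M ℂ}

theorem IsCPTP.map_sum_smul (hΛ : IsCPTP Λ) (c : ι → ℂ) (A : ι → Matrix N N ℂ) :
    Λ (∑ i, c i • A i) = ∑ i, c i • Λ (A i) := by
  obtain ⟨κ, _, K, hK, -⟩ := hΛ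
  simp only [hK, Matrix.mul_sum, Matrix.sum_mul, Matrix.mul_smul, Matrix.smul_mul,
    Finset.smul_sum]
  exact Finset.sum_comm

theorem IsCPTP.map_posSemidef (hΛ : IsCPTP Λ) {A : Matrix N N ℂ} (hA : A.PosSemidef) :
    (Λ A).PosSemidef := by
  obtain ⟨κ, _, K, hK, -⟩ := hΛ
  rw [hK]
  exact posSemidef_sum _ fun i _ => hA.mul_mul_conjTranspose_same (K i)

end Positivity

theorem stmt3_compound_relEnt_general [Fintype n] [DecidableEq n] [Fintype m] [DecidableEq m]
    (ρ : Matrix n n ℂ) (lam : n → ℝ) (E : n → Matrix n n ℂ)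
    (hdec : SchattenDecomp ρ lam E)
    (Λ : Matrix n n ℂ → Matrix m m ℂ) (hΛ : IsCPTP Λ) :
    relEnt (∑ k, (lam k : ℂ) • (E k ⊗ₖ Λ (E k))) (ρ ⊗ₖ Λ ρ) =
      ∑ k, lam k * relEnt (Λ (E k)) (Λ ρ) := by
  obtain ⟨hlam, hE, hEtr, hρ⟩ := hdec
  have hlam' k : 0 ≤ (lam k : ℂ) := Complex.zero_le_real.mpr (hlam k)
  have hΛE k : (Λ (E k)).PosSemidef := hΛ.map_posSemidef (hE.posSemidef k)
  have hΛρ : Λ ρ = ∑ k, (lam k : ℂ) • Λ (E k) := hρ ▸ hΛ.map_sum_smul _ _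
  have hΛρ_psd : (Λ ρ).PosSemidef :=
    hΛρ ▸ posSemidef_sum _ fun k _ => (hΛE k).smul (hlam' k)
  have hker k (hk : lam k ≠ 0) v (hv : Λ ρ *ᵥ v = 0) : Λ (E k) *ᵥ v = 0 := by
    have := mulVec_eq_zero_of_sum_mulVec_eq_zero (fun j => (hΛE j).smul (hlam' j)) (hΛρ ▸ hv) k
    rwa [smul_mulVec, smul_eq_zero_iff_right (Complex.ofReal_ne_zero.mpr hk)] at this
  have hσ : ∑ k, (lam k : ℂ) • (E k ⊗ₖ Λ (E k)) = ∑ k, E k ⊗ₖ ((lam k : ℂ) • Λ (E k)) := by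
    simp_rw [kronecker_smul]
  have hprod : ρ ⊗ₖ Λ ρ = ∑ k, E k ⊗ₖ ((lam k : ℂ) • Λ ρ) := by
    nth_rewrite 1 [hρ]
    simp_rw [sum_kronecker, smul_kronecker, kronecker_smul]
  rw [hσ, hprod, hE.relEnt_sum_kronecker hEtr (fun k => ((hΛE k).smul (hlam' k)).1)
    fun k => (hΛρ_psd.smul (hlam' k)).1]
  refine Finset.sum_congr rfl fun k _ => ?_
  rcases eq_or_ne (lam k) 0 with h0 | hk
  · simp [h0, relEnt]
  exact relEnt_smul_smul (hΛE k).1 hΛρ_psd.1 (hker k hk) (lam k)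

/-- The relative entropy of the compound state w.r.t. the product state equals
the Holevo-type sum. -/
theorem stmt3_compound_relEnt [Fintype n] [DecidableEq n] [Fintype m] [DecidableEq m]
    (ρ : Matrix n n ℂ) (lam : n → ℝ) (E : n → Matrix n n ℂ)
    (hρ : IsDensity ρ) (hdec : SchattenDecomp ρ lam E)
    (Λ : Matrix n n ℂ → Matrix m m ℂ) (hΛ : IsCPTP Λ) :
    relEnt (∑ k, (lam k : ℂ) • (E k ⊗ₖ Λ (E k))) (ρ ⊗ₖ Λ ρ) =
      ∑ k, lam k * relEnt (Λ (E k)) (Λ ρ) :=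
  stmt3_compound_relEnt_general ρ lam E hdec Λ hΛ
end
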